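/- Let M be a randomized mechanism on 𝒳 and let ≈_ρ be the union of relations ≈_{ρ_1},…,≈_{ρ_N}. Let δ_i be the privacy profile of M with respect to ≈_{ρ_i} and f_i the optimal tradeoff function of M with respect to ≈_{ρ_i}, so that δ := max_i δ_i is the privacy profile of M with respect to ≈_ρ. Define f(α) = sup_{ε∈ℝ} e^{−ε}(1 − δ(ε) − α). If there exists a pair X ≈_ρ X' such that δ(ε) = D^HS_{e^ε}(M(X)‖M(X')) for every ε ∈ ℝ, then min_{1≤i≤N} f_i(α) = f(α) for all α ∈ [0,1]. -/

import Mathlib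

/-!
Write `g(α) = sup_ε e^{-ε} (1 - δ(ε) - α)`. For a pair `X ≈_{ρ_i} X'`, the Neyman–Pearson bound
`1 - α - e^ε β ≤ D^HS_{e^ε}(M X‖M X') ≤ δ(ε)` for any test of level `α` and type-II error `β`
gives `β ≥ g(α)`; as `g` is a tradeoff function (a supremum of affine functions, hence convex and
lower semicontinuous, so continuous on `[0, 1]`), optimality of `f_i` gives `g ≤ f_i`.
Conversely let `X ≈_{ρ_j} X'` be the tight pair. For `c < f_j(α)` take an affine minorant
`c - s (β - α)` of `f_j` with slope `-s < 0`; evaluating `f_j`-DP on indicator tests bounds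
`δ(-log s) = D^HS_{1/s}(M X‖M X')` by `1 - α - c/s`, i.e. the term `ε = -log s` of `g(α)` is at
least `c`. Hence `f_j ≤ g`.
-/

open MeasureTheory Real Set

noncomputable section

/-- Hockey-stick divergence of order `a > 0`:
`D^HS_a(P‖Q) = sup_A (P(A) − a·Q(A))` over measurable sets `A`. -/
def hsDiv {Z : Type*} [MeasurableSpace Z] (a : ℝ) (P Q : Measure Z) : ℝ :=
  sSup {x : ℝ | ∃ A : Set Z, MeasurableSet A ∧ x = (P A).toReal - a * (Q A).toReal}

/-- The privacy profile of a mechanism `M` with respect to a neighboring relation `rel`: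
`δ(ε) = sup_{X ≈ X'} D^HS_{e^ε}(M(X)‖M(X'))`. -/
def privacyProfile {𝒳 Z : Type*} [MeasurableSpace Z] (M : 𝒳 → Measure Z)
    (rel : 𝒳 → 𝒳 → Prop) (ε : ℝ) : ℝ :=
  sSup {x : ℝ | ∃ X X' : 𝒳, rel X X' ∧ x = hsDiv (exp ε) (M X) (M X')}

/-- Tradeoff function `Λ(P‖Q)(α)`: the least type-II error
`E_Q[1 − φ]` over measurable tests `φ : Z → [0,1]` with `E_P[φ] = α`. -/
def tradeoff {Z : Type*} [MeasurableSpace Z] (P Q : Measure Z) (α : ℝ) : ℝ :=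
  sInf {x : ℝ | ∃ φ : Z → ℝ, Measurable φ ∧ (∀ z, φ z ∈ Icc (0 : ℝ) 1) ∧
    (∫ z, φ z ∂P) = α ∧ x = ∫ z, (1 - φ z) ∂Q}

/-- `M` satisfies `f`-differential privacy with respect to `rel`. -/
def fDP {𝒳 Z : Type*} [MeasurableSpace Z] (M : 𝒳 → Measure Z)
    (rel : 𝒳 → 𝒳 → Prop) (f : ℝ → ℝ) : Prop :=
  ∀ X X' : 𝒳, rel X X' → ∀ α ∈ Icc (0 : ℝ) 1, f α ≤ tradeoff (M X) (M X') α

/-- A tradeoff function: convex, continuous, non-increasing `[0,1] → [0,1]`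
with `f α ≤ 1 − α`. -/
def IsTradeoffFun (f : ℝ → ℝ) : Prop :=
  ConvexOn ℝ (Icc 0 1) f ∧ ContinuousOn f (Icc 0 1) ∧ AntitoneOn f (Icc 0 1) ∧
    ∀ α ∈ Icc (0 : ℝ) 1, f α ∈ Icc (0 : ℝ) 1 ∧ f α ≤ 1 - α

/-- `f` is the optimal tradeoff function of `M` with respect to `rel`. -/
def IsOptimalTradeoff {𝒳 Z : Type*} [MeasurableSpace Z] (M : 𝒳 → Measure Z)
    (rel : 𝒳 → 𝒳 → Prop) (f : ℝ → ℝ) : Prop :=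
  IsTradeoffFun f ∧ fDP M rel f ∧
    ∀ g : ℝ → ℝ, IsTradeoffFun g → fDP M rel g → ∀ α ∈ Icc (0 : ℝ) 1, g α ≤ f α

/-- Left-continuous inverse of a non-increasing function on `[0,1]`. -/
def leftInv (g : ℝ → ℝ) (α : ℝ) : ℝ :=
  sInf {t : ℝ | t ∈ Icc (0 : ℝ) 1 ∧ g t ≤ α}

/-- Convex conjugate of the `+∞`-extension to `ℝ` of a real-valued function on `[0,1]`:
`h*(s) = sup_{x ∈ [0,1]} (s·x − h(x))`. -/
def conjOn01 (h : ℝ → ℝ) (s : ℝ) : ℝ :=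
  sSup {y : ℝ | ∃ x ∈ Icc (0 : ℝ) 1, y = s * x - h x}

section ConvexOnIcc

variable {f : ℝ → ℝ} {a b x : ℝ}

lemma ConvexOn.mul_le_chord (hf : ConvexOn ℝ (Icc a b) f) (hx : x ∈ Icc a b) :
    (b - a) * f x ≤ (b - x) * f a + (x - a) * f b := by
  have ha : a ∈ Icc a b := ⟨le_rfl, hx.1.trans hx.2⟩
  have hb : b ∈ Icc a b := ⟨hx.1.trans hx.2, le_rfl⟩
  rcases hx.1.eq_or_lt with rfl | hax
  · simp
  rcases hx.2.eq_or_lt with rfl | hxb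
  · simp
  exact hf.secant_mono_aux1 ha hb hax hxb

lemma upperSemicontinuousWithinAt_of_le_of_eq {s : Set ℝ} {g : ℝ → ℝ}
    (hg : ContinuousWithinAt g s x) (hle : ∀ y ∈ s, f y ≤ g y) (heq : f x = g x) :
    UpperSemicontinuousWithinAt f s x := by
  intro y hy
  filter_upwards [hg (Iio_mem_nhds (heq ▸ hy)), self_mem_nhdsWithin] with z hz hzs
  exact (hle z hzs).trans_lt hz

lemma ConvexOn.upperSemicontinuousWithinAt_Icc (hf : ConvexOn ℝ (Icc a b) f) (hab : a < b)
    (hx : x = a ∨ x = b) : UpperSemicontinuousWithinAt f (Icc a b) x := by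
  set chord : ℝ → ℝ := fun y => ((b - y) * f a + (y - a) * f b) / (b - a)
  have hba : 0 < b - a := sub_pos.2 hab
  refine upperSemicontinuousWithinAt_of_le_of_eq (g := chord) (by fun_prop)
    (fun y hy => (le_div_iff₀' hba).2 (hf.mul_le_chord hy)) ?_
  rcases hx with rfl | rfl <;> simp only [chord] <;> field_simp <;> ring

lemma ConvexOn.continuousOn_Icc_of_lowerSemicontinuousOn (hf : ConvexOn ℝ (Icc a b) f)
    (hf' : LowerSemicontinuousOn f (Icc a b)) : ContinuousOn f (Icc a b) := by
  rcases lt_or_ge a b with hab | hba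
  · have hcont : ∀ x, (x = a ∨ x = b) → ContinuousWithinAt f (Icc a b) x := fun x hx =>
      continuousWithinAt_iff_lower_upperSemicontinuousWithinAt.2
        ⟨hf' x (by rcases hx with rfl | rfl <;> simp [hab.le]),
          hf.upperSemicontinuousWithinAt_Icc hab hx⟩
    exact hf.continuousOn_Icc hab ((continuousWithinAt_Icc_iff_Ici hab).1 (hcont a (.inl rfl)))
      ((continuousWithinAt_Icc_iff_Iic hab).1 (hcont b (.inr rfl)))
  · exact (subsingleton_Icc_of_ge hba).continuousOn f

end ConvexOnIcc

lemma ConvexOn.exists_decreasing_affine_le_of_lt {f : ℝ → ℝ} {α c : ℝ} (hconv : ConvexOn ℝ (Icc 0 1) f)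
    (hlsc : LowerSemicontinuousOn f (Icc 0 1)) (hanti : AntitoneOn f (Icc 0 1))
    (hα : α ∈ Icc (0 : ℝ) 1) (hc : c < f α) :
    ∃ s > 0, ∀ β ∈ Icc (0 : ℝ) 1, c - s * (β - α) ≤ f β := by
  obtain ⟨m, m', hle, rfl⟩ := hconv.exists_affine_le_of_lt_real hα hc isClosed_Icc hlsc
  rcases lt_or_ge m 0 with hm | hm
  · exact ⟨-m, neg_pos.2 hm, fun β hβ => by linarith [hle β hβ]⟩
  -- for `m ≥ 0` any slope `-s` with `s ≤ f α - c` works: the minorant handles `[α, 1]`,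
  -- antitonicity handles `[0, α]`
  refine ⟨f α - (m * α + m'), sub_pos.2 hc, fun β hβ => ?_⟩
  rcases le_total α β with hαβ | hβα
  · nlinarith [hle β hβ, sub_pos.2 hc]
  · nlinarith [hanti hβ hα hβα, sub_pos.2 hc, hβ.1, hα.2]

lemma norm_le_one_of_mem_Icc {x : ℝ} (hx : x ∈ Icc (0 : ℝ) 1) : ‖x‖ ≤ 1 := by
  rw [Real.norm_of_nonneg hx.1]
  exact hx.2

section HockeyStick

variable {Z : Type*} [MeasurableSpace Z] {P Q : Measure Z} {a c : ℝ}

lemma le_hsDiv [IsProbabilityMeasure P] (ha : 0 ≤ a) {A : Set Z} (hA : MeasurableSet A) :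
    P.real A - a * Q.real A ≤ hsDiv a P Q := by
  refine le_csSup ⟨1, ?_⟩ ⟨A, hA, rfl⟩
  rintro _ ⟨B, -, rfl⟩
  exact (sub_le_self _ (by positivity)).trans measureReal_le_one

lemma hsDiv_le (h : ∀ A, MeasurableSet A → P.real A - a * Q.real A ≤ c) : hsDiv a P Q ≤ c := by
  refine csSup_le ⟨_, ∅, .empty, rfl⟩ ?_
  rintro _ ⟨A, hA, rfl⟩
  exact h A hA

lemma hsDiv_le_one [IsProbabilityMeasure P] (ha : 0 ≤ a) : hsDiv a P Q ≤ 1 :=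
  hsDiv_le fun _ _ => (sub_le_self _ (by positivity)).trans measureReal_le_one

lemma one_sub_le_hsDiv [IsProbabilityMeasure P] [IsProbabilityMeasure Q] (ha : 0 ≤ a) :
    1 - a ≤ hsDiv a P Q := by
  simpa using le_hsDiv (P := P) (Q := Q) ha .univ

lemma integral_mul_le_setIntegral_nonneg {ν : Measure Z} {ψ d : Z → ℝ} (hψ : Measurable ψ)
    (hψ01 : ∀ z, ψ z ∈ Icc (0 : ℝ) 1) (hd : Measurable d) (hdi : Integrable d ν) :
    ∫ z, ψ z * d z ∂ν ≤ ∫ z in {z | 0 ≤ d z}, d z ∂ν := by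
  have hS : MeasurableSet {z | 0 ≤ d z} := measurableSet_le measurable_const hd
  rw [← integral_indicator hS]
  refine integral_mono (hdi.bdd_mul hψ.aestronglyMeasurable
    (.of_forall fun z => norm_le_one_of_mem_Icc (hψ01 z))) (hdi.indicator hS) fun z => ?_
  by_cases hz : 0 ≤ d z
  · simpa [indicator_of_mem, hz] using mul_le_of_le_one_left hz (hψ01 z).2
  · simpa [indicator_of_notMem, hz] using
      mul_nonpos_of_nonneg_of_nonpos (hψ01 z).1 (not_le.1 hz).le

/-- Neyman–Pearson: the likelihood-ratio set `{p ≥ a q}` is an optimal test. -/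
lemma integral_sub_mul_integral_le_hsDiv [IsProbabilityMeasure P] [IsFiniteMeasure Q]
    (ha : 0 ≤ a) {ψ : Z → ℝ} (hψ : Measurable ψ) (hψ01 : ∀ z, ψ z ∈ Icc (0 : ℝ) 1) :
    ∫ z, ψ z ∂P - a * ∫ z, ψ z ∂Q ≤ hsDiv a P Q := by
  set ν := P + Q
  have hPν : P ≪ ν := Measure.absolutelyContinuous_of_le (Measure.le_add_right le_rfl)
  have hQν : Q ≪ ν := Measure.absolutelyContinuous_of_le (Measure.le_add_left le_rfl)
  set p : Z → ℝ := fun z => (P.rnDeriv ν z).toReal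
  set q : Z → ℝ := fun z => (Q.rnDeriv ν z).toReal
  have hp : Integrable p ν := Measure.integrable_toReal_rnDeriv
  have hq : Integrable q ν := Measure.integrable_toReal_rnDeriv
  have hd : Measurable fun z => p z - a * q z :=
    (Measure.measurable_rnDeriv P ν).ennreal_toReal.sub
      ((Measure.measurable_rnDeriv Q ν).ennreal_toReal.const_mul a)
  have hdi : Integrable (fun z => p z - a * q z) ν := hp.sub (hq.const_mul a)
  have hψb : ∀ᵐ z ∂ν, ‖ψ z‖ ≤ 1 := .of_forall fun z => norm_le_one_of_mem_Icc (hψ01 z)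
  have hPp : ∫ z, ψ z ∂P = ∫ z, ψ z * p z ∂ν := by
    simp only [← integral_rnDeriv_smul hPν, smul_eq_mul, p, mul_comm]
  have hQq : ∫ z, ψ z ∂Q = ∫ z, ψ z * q z ∂ν := by
    simp only [← integral_rnDeriv_smul hQν, smul_eq_mul, q, mul_comm]
  calc ∫ z, ψ z ∂P - a * ∫ z, ψ z ∂Q
      = ∫ z, ψ z * (p z - a * q z) ∂ν := by
        rw [hPp, hQq, ← integral_const_mul, ← integral_sub
          (hp.bdd_mul hψ.aestronglyMeasurable hψb)
          ((hq.bdd_mul hψ.aestronglyMeasurable hψb).const_mul a)]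
        congr 1; ext z; ring
    _ ≤ ∫ z in {z | 0 ≤ p z - a * q z}, (p z - a * q z) ∂ν :=
        integral_mul_le_setIntegral_nonneg hψ hψ01 hd hdi
    _ = P.real {z | 0 ≤ p z - a * q z} - a * Q.real {z | 0 ≤ p z - a * q z} := by
        rw [integral_sub hp.integrableOn (hq.const_mul a).integrableOn, integral_const_mul,
          Measure.setIntegral_toReal_rnDeriv hPν, Measure.setIntegral_toReal_rnDeriv hQν]
    _ ≤ hsDiv a P Q := le_hsDiv ha (measurableSet_le measurable_const hd)

end HockeyStick

section Tradeoff

variable {Z : Type*} [MeasurableSpace Z] {P Q : Measure Z} {α : ℝ}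

lemma tradeoff_le {φ : Z → ℝ} (hφ : Measurable φ) (hφ01 : ∀ z, φ z ∈ Icc (0 : ℝ) 1)
    (hφP : ∫ z, φ z ∂P = α) : tradeoff P Q α ≤ ∫ z, (1 - φ z) ∂Q := by
  refine csInf_le ⟨0, ?_⟩ ⟨φ, hφ, hφ01, hφP, rfl⟩
  rintro _ ⟨ψ, -, hψ01, -, rfl⟩
  exact integral_nonneg fun z => sub_nonneg.2 (hψ01 z).2

lemma le_tradeoff [IsProbabilityMeasure P] {c : ℝ} (hα : α ∈ Icc (0 : ℝ) 1)
    (h : ∀ φ : Z → ℝ, Measurable φ → (∀ z, φ z ∈ Icc (0 : ℝ) 1) → ∫ z, φ z ∂P = α →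
      c ≤ ∫ z, (1 - φ z) ∂Q) : c ≤ tradeoff P Q α := by
  refine le_csInf ⟨_, fun _ => α, measurable_const, fun _ => hα, by simp, rfl⟩ ?_
  rintro _ ⟨φ, hφ, hφ01, hφP, rfl⟩
  exact h φ hφ hφ01 hφP

lemma tradeoff_le_one_sub [IsProbabilityMeasure P] [IsProbabilityMeasure Q]
    (hα : α ∈ Icc (0 : ℝ) 1) : tradeoff P Q α ≤ 1 - α :=
  (tradeoff_le measurable_const (fun _ => hα) (by simp)).trans_eq (by simp)

lemma tradeoff_measureReal_compl_le [IsFiniteMeasure Q] {A : Set Z} (hA : MeasurableSet A) :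
    tradeoff P Q (P.real Aᶜ) ≤ Q.real A := by
  refine (tradeoff_le (measurable_one.indicator hA.compl) (fun z => ?_)
    (integral_indicator_one hA.compl)).trans_eq ?_
  · by_cases hz : z ∈ A <;> simp [hz]
  · simp [indicator_compl, integral_indicator_one hA]

end Tradeoff

lemma hsDiv_le_privacyProfile {𝒳 Z : Type*} [MeasurableSpace Z] {M : 𝒳 → Measure Z}
    (hM : ∀ X, IsProbabilityMeasure (M X)) {rel : 𝒳 → 𝒳 → Prop} {X X' : 𝒳} (h : rel X X')
    (ε : ℝ) : hsDiv (exp ε) (M X) (M X') ≤ privacyProfile M rel ε := by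
  refine le_csSup ⟨1, ?_⟩ ⟨X, X', h, rfl⟩
  rintro _ ⟨Y, Y', -, rfl⟩
  have := hM Y
  exact hsDiv_le_one (exp_pos ε).le

def dualTradeoff (δ : ℝ → ℝ) (α : ℝ) : ℝ :=
  ⨆ ε : ℝ, exp (-ε) * (1 - δ ε - α)

section DualTradeoff

variable {δ : ℝ → ℝ} {α : ℝ}

lemma bddAbove_dualTradeoff (hδ : ∀ ε, 1 - exp ε ≤ δ ε) (hα : 0 ≤ α) :
    BddAbove (range fun ε => exp (-ε) * (1 - δ ε - α)) := by
  refine ⟨1, ?_⟩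
  rintro _ ⟨ε, rfl⟩
  calc exp (-ε) * (1 - δ ε - α) ≤ exp (-ε) * exp ε := by gcongr; linarith [hδ ε]
    _ = 1 := by rw [← exp_add, neg_add_cancel, exp_zero]

lemma dualTradeoff_nonneg (hδ : ∀ ε, 1 - exp ε ≤ δ ε) (hδ1 : ∀ ε, δ ε ≤ 1)
    (hα : α ∈ Icc (0 : ℝ) 1) : 0 ≤ dualTradeoff δ α := by
  refine le_of_tendsto' (by simpa using tendsto_exp_neg_atTop_nhds_zero.neg) fun ε => ?_
  calc -exp (-ε) ≤ exp (-ε) * (1 - δ ε - α) := by nlinarith [exp_pos (-ε), hδ1 ε, hα.2]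
    _ ≤ dualTradeoff δ α := le_ciSup (bddAbove_dualTradeoff hδ hα.1) ε

lemma antitoneOn_dualTradeoff (hδ : ∀ ε, 1 - exp ε ≤ δ ε) :
    AntitoneOn (dualTradeoff δ) (Ici 0) := fun x hx y _ hxy =>
  ciSup_le fun ε => (mul_le_mul_of_nonneg_left (by linarith) (exp_pos _).le).trans
    (le_ciSup (bddAbove_dualTradeoff hδ hx) ε)

lemma convexOn_dualTradeoff (hδ : ∀ ε, 1 - exp ε ≤ δ ε) :
    ConvexOn ℝ (Ici 0) (dualTradeoff δ) := by
  refine ⟨convex_Ici 0, fun x hx y hy a b ha hb hab => ciSup_le fun ε => ?_⟩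
  have hsplit : exp (-ε) * (1 - δ ε - (a • x + b • y)) =
      a * (exp (-ε) * (1 - δ ε - x)) + b * (exp (-ε) * (1 - δ ε - y)) := by
    simp only [smul_eq_mul]
    linear_combination (exp (-ε) * (1 - δ ε)) * hab.symm
  rw [hsplit, smul_eq_mul, smul_eq_mul]
  gcongr
  exacts [le_ciSup (bddAbove_dualTradeoff hδ hx) ε, le_ciSup (bddAbove_dualTradeoff hδ hy) ε]

lemma lowerSemicontinuousOn_dualTradeoff (hδ : ∀ ε, 1 - exp ε ≤ δ ε) :
    LowerSemicontinuousOn (dualTradeoff δ) (Ici 0) :=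
  lowerSemicontinuousOn_ciSup (fun _ hx => bddAbove_dualTradeoff hδ hx)
    fun _ => (by fun_prop : Continuous _).lowerSemicontinuous.lowerSemicontinuousOn _

variable {Z : Type*} [MeasurableSpace Z] {P Q : Measure Z}

lemma dualTradeoff_le_tradeoff [IsProbabilityMeasure P] [IsFiniteMeasure Q]
    (hδ : ∀ ε, hsDiv (exp ε) P Q ≤ δ ε) (hα : α ∈ Icc (0 : ℝ) 1) :
    dualTradeoff δ α ≤ tradeoff P Q α := by
  refine le_tradeoff hα fun φ hφ hφ01 hφP => ciSup_le fun ε => ?_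
  have hφi : Integrable φ P :=
    .of_bound hφ.aestronglyMeasurable 1 (.of_forall fun z => norm_le_one_of_mem_Icc (hφ01 z))
  have hNP := integral_sub_mul_integral_le_hsDiv (P := P) (Q := Q) (ψ := fun z => 1 - φ z)
    (exp_pos ε).le (measurable_const.sub hφ)
    fun z => ⟨sub_nonneg.2 (hφ01 z).2, sub_le_self _ (hφ01 z).1⟩
  rw [integral_sub (integrable_const 1) hφi, hφP] at hNP
  simp only [integral_const, probReal_univ, smul_eq_mul, mul_one] at hNP
  calc exp (-ε) * (1 - δ ε - α) ≤ exp (-ε) * (exp ε * ∫ z, (1 - φ z) ∂Q) := by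
        gcongr; linarith [hδ ε]
    _ = ∫ z, (1 - φ z) ∂Q := by rw [← mul_assoc, ← exp_add, neg_add_cancel, exp_zero, one_mul]

lemma isTradeoffFun_dualTradeoff [IsProbabilityMeasure P] [IsProbabilityMeasure Q]
    (hδ : ∀ ε, δ ε = hsDiv (exp ε) P Q) : IsTradeoffFun (dualTradeoff δ) := by
  have hδ0 : ∀ ε, 1 - exp ε ≤ δ ε := fun ε => hδ ε ▸ one_sub_le_hsDiv (exp_pos ε).le
  have hδ1 : ∀ ε, δ ε ≤ 1 := fun ε => hδ ε ▸ hsDiv_le_one (exp_pos ε).le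
  have hconv := (convexOn_dualTradeoff hδ0).subset Icc_subset_Ici_self (convex_Icc 0 1)
  refine ⟨hconv, hconv.continuousOn_Icc_of_lowerSemicontinuousOn
    ((lowerSemicontinuousOn_dualTradeoff hδ0).mono Icc_subset_Ici_self),
    (antitoneOn_dualTradeoff hδ0).mono Icc_subset_Ici_self, fun α hα => ?_⟩
  have hle : dualTradeoff δ α ≤ 1 - α :=
    (dualTradeoff_le_tradeoff (fun ε => (hδ ε).ge) hα).trans (tradeoff_le_one_sub hα)
  exact ⟨⟨dualTradeoff_nonneg hδ0 hδ1 hα, by linarith [hα.1]⟩, hle⟩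

lemma le_dualTradeoff [IsProbabilityMeasure P] [IsProbabilityMeasure Q] {f : ℝ → ℝ}
    (hf : IsTradeoffFun f) (hfPQ : ∀ A, MeasurableSet A → f (P.real Aᶜ) ≤ Q.real A)
    (hδ : ∀ ε, δ ε = hsDiv (exp ε) P Q) (hα : α ∈ Icc (0 : ℝ) 1) :
    f α ≤ dualTradeoff δ α := by
  obtain ⟨hconv, hcont, hanti, -⟩ := hf
  refine le_of_forall_lt_imp_le_of_dense fun c hc => ?_
  obtain ⟨s, hs, hline⟩ := hconv.exists_decreasing_affine_le_of_lt hcont.lowerSemicontinuousOn hanti hα hc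
  have hδs : δ (-log s) ≤ 1 - α - c * s⁻¹ := by
    rw [hδ, exp_neg, exp_log hs]
    refine hsDiv_le fun A hA => ?_
    have hA' := (hline _ ⟨measureReal_nonneg, measureReal_le_one⟩).trans (hfPQ A hA)
    rw [probReal_compl_eq_one_sub hA] at hA'
    have := mul_le_mul_of_nonneg_left hA' (inv_pos.2 hs).le
    rw [mul_sub, ← mul_assoc, inv_mul_cancel₀ hs.ne', one_mul] at this
    linarith
  calc c = exp (-(-log s)) * (c * s⁻¹) := by rw [neg_neg, exp_log hs]; field_simp
    _ ≤ exp (-(-log s)) * (1 - δ (-log s) - α) := by gcongr; linarith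
    _ ≤ dualTradeoff δ α := le_ciSup (bddAbove_dualTradeoff
        (fun ε => hδ ε ▸ one_sub_le_hsDiv (exp_pos ε).le) hα.1) _

end DualTradeoff

/-- tightness: let `≈_ρ` be the union of relations `≈_{ρ_1},…,≈_{ρ_N}`,
`δ_i` the privacy profile and `f_i` the optimal tradeoff function of `M` for `≈_{ρ_i}`,
and `δ = max_i δ_i` the privacy profile for `≈_ρ`. If some pair `X ≈_ρ X'` attains
`δ(ε) = D^HS_{e^ε}(M(X)‖M(X'))` for every `ε`, then
`min_i f_i(α) = sup_ε e^{−ε}(1 − δ(ε) − α)` for all `α ∈ [0,1]`. -/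
theorem min_optimalTradeoff_eq_dual
    {𝒳 Z : Type*} [MeasurableSpace Z] (M : 𝒳 → Measure Z)
    (hM : ∀ X, IsProbabilityMeasure (M X))
    (N : ℕ) (hN : 0 < N)
    (relρ : 𝒳 → 𝒳 → Prop) (rels : Fin N → 𝒳 → 𝒳 → Prop)
    (hdecomp : ∀ X X', relρ X X' ↔ ∃ i, rels i X X')
    (δi : Fin N → ℝ → ℝ) (hδi : ∀ i ε, δi i ε = privacyProfile M (rels i) ε)
    (fi : Fin N → ℝ → ℝ) (hfi : ∀ i, IsOptimalTradeoff M (rels i) (fi i))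
    (δ : ℝ → ℝ) (hδ : ∀ ε, δ ε = sSup (Set.range fun i => δi i ε))
    (htight : ∃ X X', relρ X X' ∧ ∀ ε : ℝ, δ ε = hsDiv (exp ε) (M X) (M X')) :
    ∀ α ∈ Icc (0 : ℝ) 1,
      sInf (Set.range fun i => fi i α) = ⨆ ε : ℝ, exp (-ε) * (1 - δ ε - α) := by
  intro α hα
  obtain ⟨X, X', hXX', htight⟩ := htight
  obtain ⟨j, hj⟩ := (hdecomp X X').1 hXX'
  have := hM X
  have := hM X'
  have hg : IsTradeoffFun (dualTradeoff δ) := isTradeoffFun_dualTradeoff htight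
  have hδi_le : ∀ i ε, δi i ε ≤ δ ε := fun i ε => by
    rw [hδ ε]; exact le_csSup (finite_range _).bddAbove ⟨i, rfl⟩
  have hg_le : ∀ i, dualTradeoff δ α ≤ fi i α := fun i =>
    (hfi i).2.2 _ hg (fun Y Y' hY β hβ => by
      have := hM Y
      have := hM Y'
      exact dualTradeoff_le_tradeoff (fun ε =>
        (hsDiv_le_privacyProfile hM hY ε).trans ((hδi i ε).symm.trans_le (hδi_le i ε))) hβ) α hα
  have hle_g : fi j α ≤ dualTradeoff δ α :=
    le_dualTradeoff (hfi j).1 (fun A hA => ((hfi j).2.1 X X' hj _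
      ⟨measureReal_nonneg, measureReal_le_one⟩).trans (tradeoff_measureReal_compl_le hA)) htight hα
  have : Nonempty (Fin N) := ⟨⟨0, hN⟩⟩
  exact le_antisymm ((ciInf_le (finite_range _).bddBelow j).trans hle_g) (le_ciInf hg_le)
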